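/- arXiv:1604.03774 — 2 statements merged into one kernel-verified Lean document; each statement's English description precedes it below -/
import Mathlib

section
/- Let F_q have odd characteristic p, and let C be an LCD [n,k,d] code over F_q. Then the matrix-product code M = [C, C]·A with A = ((1,1),(1,p−1)) is an LCD code over F_q of length 2n, dimension 2k, and minimum distance at least d. (Indeed, (A^{−1})^T = (1/2)·A, so A is quasi-orthogonal.) -/
/-!
Over a field of odd characteristic `p` the matrix `A = !![1, 1; 1, p - 1]` is `!![1, 1; 1, -1]`,
so `A Aᵀ = 2 • 1` with `2 ≠ 0`. Hence `(u, v) ↦ (u + v, u - v)` is injective, giving dimension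
`2k`, and the inner product of two codewords `(u + v, u - v)`, `(e + f, e - f)` is
`2 (u ⬝ e + v ⬝ f)`; testing a codeword of `M ∩ M^⊥` against `(e, e)` and `(e, -e)` puts `u` and
`v` in `C ∩ C^⊥ = 0`. Finally both blocks `u + v` and `u - v` lie in `C`, and a nonzero codeword
has a nonzero block, of weight at least `d`.
-/

open Polynomial Matrix Finset

variable {F : Type*} [Field F]

/-- The minimum (Hamming) distance of a linear code `C ⊆ F^ι`:
the least Hamming weight of a nonzero codeword. -/
noncomputable def minDist {ι : Type*} [Fintype ι] [DecidableEq F]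
    (C : Submodule F (ι → F)) : ℕ :=
  sInf {d | ∃ x ∈ C, x ≠ 0 ∧ hammingNorm x = d}

/-- The Euclidean dual of a linear code. -/
def dualCode {ι : Type*} [Fintype ι] (C : Submodule F (ι → F)) :
    Submodule F (ι → F) where
  carrier := {a | ∀ b ∈ C, ∑ i, a i * b i = 0}
  add_mem' := by
    intro a b ha hb c hc
    simp only [Pi.add_apply, add_mul, Finset.sum_add_distrib,
      ha c hc, hb c hc, add_zero]
  zero_mem' := by
    intro b hb
    simp
  smul_mem' := by
    intro r a ha b hb
    simp only [Pi.smul_apply, smul_eq_mul, mul_assoc, ← Finset.mul_sum,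
      ha b hb, mul_zero]

/-- `C` is a linear complementary dual (LCD) code. -/
def IsLCD {ι : Type*} [Fintype ι] (C : Submodule F (ι → F)) : Prop :=
  C ⊓ dualCode C = ⊥

/-- The Hermitian dual (with respect to `⟨a,b⟩ = ∑ i, a i * (b i)^l`) of a linear code. -/
def hermitianDual (l : ℕ) {ι : Type*} [Fintype ι] (C : Submodule F (ι → F)) :
    Submodule F (ι → F) where
  carrier := {a | ∀ b ∈ C, ∑ i, a i * (b i) ^ l = 0}
  add_mem' := by
    intro a b ha hb c hc
    simp only [Pi.add_apply, add_mul, Finset.sum_add_distrib,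
      ha c hc, hb c hc, add_zero]
  zero_mem' := by
    intro b hb
    simp
  smul_mem' := by
    intro r a ha b hb
    simp only [Pi.smul_apply, smul_eq_mul, mul_assoc, ← Finset.mul_sum,
      ha b hb, mul_zero]

/-- `C` is a Hermitian linear complementary dual code. -/
def IsHermitianLCD (l : ℕ) {ι : Type*} [Fintype ι] (C : Submodule F (ι → F)) : Prop :=
  C ⊓ hermitianDual l C = ⊥

/-- The matrix-product code `[C_1, …, C_s]·A`: all concatenated vectors
`(∑ i a_{i1} c_i, …, ∑ i a_{im} c_i)` with `c_i ∈ C_i`; coordinates are indexed by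
`Fin m × Fin n` (block `j`, position `t` within block). -/
def matrixProductCode {s m n : ℕ} (A : Matrix (Fin s) (Fin m) F)
    (C : Fin s → Submodule F (Fin n → F)) :
    Submodule F (Fin m × Fin n → F) where
  carrier := {x | ∃ c : Fin s → (Fin n → F), (∀ i, c i ∈ C i) ∧
    x = fun p => ∑ i, A i p.1 * c i p.2}
  add_mem' := by
    rintro x y ⟨c, hc, rfl⟩ ⟨d, hd, rfl⟩
    refine ⟨fun i => c i + d i, fun i => (C i).add_mem (hc i) (hd i), ?_⟩
    funext p
    simp [mul_add, Finset.sum_add_distrib]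
  zero_mem' := ⟨0, fun i => (C i).zero_mem, by funext p; simp⟩
  smul_mem' := by
    rintro r x ⟨c, hc, rfl⟩
    refine ⟨fun i => r • c i, fun i => (C i).smul_mem r (hc i), ?_⟩
    funext p
    simp [Finset.mul_sum, mul_left_comm]

/-- A matrix is non-singular by columns (NSC) if, for every `t ≤ s` and every strictly
increasing choice of `t` columns, the `t × t` submatrix formed from the first `t` rows
and those columns is non-singular. -/
def NSC {s m : ℕ} (A : Matrix (Fin s) (Fin m) F) : Prop :=
  ∀ (t : ℕ) (ht : t ≤ s) (j : Fin t → Fin m), StrictMono j →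
    (Matrix.of fun a b : Fin t => A (Fin.castLE ht a) (j b)).det ≠ 0

/-- The cyclic code of length `n` with generator polynomial `g` (a divisor of `Xⁿ - 1`),
viewed in `F^n` via the coefficient identification: a word `c` lies in the code iff the
associated polynomial `∑ cᵢ Xⁱ` (of degree `< n`) is a multiple of `g`. -/
def cyclicCode (n : ℕ) (g : F[X]) : Submodule F (Fin n → F) where
  carrier := {c | g ∣ ∑ i : Fin n, Polynomial.C (c i) * Polynomial.X ^ (i : ℕ)}
  add_mem' := by
    intro a b ha hb
    have h : (∑ i : Fin n, Polynomial.C ((a + b) i) * Polynomial.X ^ (i : ℕ))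
        = (∑ i : Fin n, Polynomial.C (a i) * Polynomial.X ^ (i : ℕ))
          + (∑ i : Fin n, Polynomial.C (b i) * Polynomial.X ^ (i : ℕ)) := by
      simp [add_mul, Finset.sum_add_distrib]
    simp only [Set.mem_setOf_eq] at ha hb ⊢
    rw [h]
    exact dvd_add ha hb
  zero_mem' := by simp
  smul_mem' := by
    intro r a ha
    have h : (∑ i : Fin n, Polynomial.C ((r • a) i) * Polynomial.X ^ (i : ℕ))
        = Polynomial.C r * ∑ i : Fin n, Polynomial.C (a i) * Polynomial.X ^ (i : ℕ) := by
      simp [Finset.mul_sum, mul_assoc]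
    simp only [Set.mem_setOf_eq] at ha ⊢
    rw [h]
    exact ha.mul_left _

/-- The conjugate-reciprocal polynomial
`f^⊥(x) = a₀^{-l} (a_k^l + a_{k-1}^l x + ⋯ + a₀^l x^k)` of `f = a₀ + a₁ x + ⋯ + a_k x^k`. -/
noncomputable def conjReciprocal (l : ℕ) (f : F[X]) : F[X] :=
  Polynomial.C ((f.coeff 0 ^ l)⁻¹) *
    ∑ i ∈ Finset.range (f.natDegree + 1),
      Polynomial.C (f.coeff (f.natDegree - i) ^ l) * Polynomial.X ^ i

theorem pi_single_mem {ι M : Type*} [DecidableEq ι] [AddCommMonoid M] [Module F M]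
    {C : ι → Submodule F M} {i : ι} {u : M} (hu : u ∈ C i) (i' : ι) :
    (Pi.single i u : ι → M) i' ∈ C i' := by
  rcases eq_or_ne i' i with rfl | h
  · simpa
  · simp [h]

section HammingDistance

variable {ι κ : Type*} [Fintype ι] [Fintype κ] [DecidableEq F]

theorem hammingNorm_comp_le_of_injective (x : κ → F) {f : ι → κ}
    (hf : Function.Injective f) : hammingNorm (x ∘ f) ≤ hammingNorm x :=
  Finset.card_le_card_of_injOn f (fun t ht => by simpa using ht) hf.injOn

theorem minDist_le_hammingNorm {C : Submodule F (ι → F)} {x : ι → F} (hx : x ∈ C)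
    (hx0 : x ≠ 0) : minDist C ≤ hammingNorm x :=
  Nat.sInf_le ⟨x, hx, hx0, rfl⟩

theorem minDist_le_minDist_of_forall {C : Submodule F (ι → F)} {D : Submodule F (κ → F)}
    (hD : C ≠ ⊥ → D ≠ ⊥)
    (h : ∀ x ∈ D, x ≠ 0 → ∃ y ∈ C, y ≠ 0 ∧ hammingNorm y ≤ hammingNorm x) :
    minDist C ≤ minDist D := by
  by_cases hC : C = ⊥
  · simp [minDist, hC]
  obtain ⟨x, hx, hx0⟩ := (Submodule.ne_bot_iff D).1 (hD hC)
  refine le_csInf ⟨_, x, hx, hx0, rfl⟩ ?_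
  rintro _ ⟨x, hx, hx0, rfl⟩
  obtain ⟨y, hy, hy0, hyx⟩ := h x hx hx0
  exact (minDist_le_hammingNorm hy hy0).trans hyx

end HammingDistance

section MatrixProductCode

variable {s m n : ℕ}

def matrixProductMap (A : Matrix (Fin s) (Fin m) F) :
    (Fin s → Fin n → F) →ₗ[F] (Fin m × Fin n → F) where
  toFun c q := ∑ i, A i q.1 * c i q.2
  map_add' c e := by
    ext q
    simp [mul_add, Finset.sum_add_distrib]
  map_smul' r c := by
    ext q
    simp [Finset.mul_sum, mul_left_comm]

theorem matrixProductMap_apply (A : Matrix (Fin s) (Fin m) F) (c : Fin s → Fin n → F)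
    (q : Fin m × Fin n) : matrixProductMap A c q = ∑ i, A i q.1 * c i q.2 :=
  rfl

theorem mem_matrixProductCode {A : Matrix (Fin s) (Fin m) F}
    {C : Fin s → Submodule F (Fin n → F)} {x : Fin m × Fin n → F} :
    x ∈ matrixProductCode A C ↔ ∃ c, (∀ i, c i ∈ C i) ∧ matrixProductMap A c = x :=
  exists_congr fun _ => and_congr_right fun _ => eq_comm

theorem matrixProductMap_mem_matrixProductCode (A : Matrix (Fin s) (Fin m) F)
    {C : Fin s → Submodule F (Fin n → F)} {c : Fin s → Fin n → F} (hc : ∀ i, c i ∈ C i) :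
    matrixProductMap A c ∈ matrixProductCode A C :=
  mem_matrixProductCode.2 ⟨c, hc, rfl⟩

theorem matrixProductCode_eq_range (A : Matrix (Fin s) (Fin m) F)
    (C : Fin s → Submodule F (Fin n → F)) :
    matrixProductCode A C =
      LinearMap.range (matrixProductMap A ∘ₗ LinearMap.piMap fun i => (C i).subtype) := by
  ext x
  rw [mem_matrixProductCode, LinearMap.mem_range]
  constructor
  · rintro ⟨c, hc, rfl⟩
    exact ⟨fun i => ⟨c i, hc i⟩, rfl⟩
  · rintro ⟨c, rfl⟩
    exact ⟨fun i => c i, fun i => (c i).2, rfl⟩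

/-- A right inverse `B` of `A` recovers `c` from `[c_1, …, c_s] A`, block by block. -/
theorem matrixProductMap_injective {A : Matrix (Fin s) (Fin m) F}
    {B : Matrix (Fin m) (Fin s) F} (hAB : A * B = 1) :
    Function.Injective (matrixProductMap (n := n) A) := by
  refine Function.LeftInverse.injective (g := fun x i t => ∑ j, x (j, t) * B j i) fun c => ?_
  ext i t
  have hAB_apply : ∀ i', ∑ j, A i' j * B j i = (1 : Matrix (Fin s) (Fin s) F) i' i := by
    intro i'
    rw [← hAB, Matrix.mul_apply]
  simp only [matrixProductMap_apply, Finset.sum_mul]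
  rw [Finset.sum_comm]
  simp_rw [mul_right_comm _ (c _ t), ← Finset.sum_mul, hAB_apply, Matrix.one_apply]
  simp

theorem finrank_matrixProductCode {A : Matrix (Fin s) (Fin m) F}
    {B : Matrix (Fin m) (Fin s) F} (hAB : A * B = 1) (C : Fin s → Submodule F (Fin n → F)) :
    Module.finrank F (matrixProductCode A C) = ∑ i, Module.finrank F (C i) := by
  have hinj :
      Function.Injective (matrixProductMap A ∘ₗ LinearMap.piMap fun i => (C i).subtype) :=
    (matrixProductMap_injective hAB).comp (.piMap fun _ => Subtype.val_injective)
  rw [matrixProductCode_eq_range, LinearMap.finrank_range_of_inj hinj,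
    Module.finrank_pi_fintype]

theorem dotProduct_matrixProductMap (A : Matrix (Fin s) (Fin m) F) (c e : Fin s → Fin n → F) :
    matrixProductMap A c ⬝ᵥ matrixProductMap A e =
      ∑ i, ∑ i', (A * Aᵀ) i i' * (c i ⬝ᵥ e i') := by
  simp only [dotProduct, matrixProductMap_apply, Matrix.mul_apply, transpose_apply,
    Finset.sum_mul_sum, Fintype.sum_prod_type]
  simp_rw [Finset.sum_comm (γ := Fin m), Finset.sum_comm (γ := Fin n), mul_mul_mul_comm]

theorem isLCD_matrixProductCode {A : Matrix (Fin s) (Fin m) F} {w : Fin s → F}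
    (hA : A * Aᵀ = diagonal w) (hw : ∀ i, w i ≠ 0) {C : Fin s → Submodule F (Fin n → F)}
    (hC : ∀ i, IsLCD (C i)) : IsLCD (matrixProductCode A C) := by
  rw [IsLCD, Submodule.eq_bot_iff]
  rintro x ⟨hxM, hxD⟩
  obtain ⟨c, hc, rfl⟩ := mem_matrixProductCode.1 hxM
  have hc_dual : ∀ i, c i ∈ dualCode (C i) := by
    intro i e he
    have h : matrixProductMap A c ⬝ᵥ matrixProductMap A (Pi.single i e) = 0 :=
      hxD _ (matrixProductMap_mem_matrixProductCode A (pi_single_mem he))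
    rw [dotProduct_matrixProductMap, hA] at h
    show c i ⬝ᵥ e = 0
    simpa [diagonal_apply, Pi.single_apply, apply_ite, hw i] using h
  have hc0 : c = 0 := funext fun i =>
    (Submodule.mem_bot F).1 (hC i ▸ Submodule.mem_inf.2 ⟨hc i, hc_dual i⟩)
  rw [hc0, map_zero]

theorem matrixProductCode_ne_bot {A : Matrix (Fin s) (Fin m) F}
    {C : Fin s → Submodule F (Fin n → F)} {i : Fin s} {j : Fin m} (hA : A i j ≠ 0)
    (hC : C i ≠ ⊥) : matrixProductCode A C ≠ ⊥ := by
  obtain ⟨u, hu, hu0⟩ := (Submodule.ne_bot_iff _).1 hC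
  obtain ⟨t, ht⟩ := Function.ne_iff.1 hu0
  refine (Submodule.ne_bot_iff _).2
    ⟨_, matrixProductMap_mem_matrixProductCode A (pi_single_mem hu), fun h => ?_⟩
  exact ht (by
    simpa [matrixProductMap_apply, Pi.single_apply, ite_apply, hA] using congrFun h (j, t))

theorem matrixProductMap_block_mem (A : Matrix (Fin s) (Fin m) F)
    {C : Submodule F (Fin n → F)} {c : Fin s → Fin n → F} (hc : ∀ i, c i ∈ C) (j : Fin m) :
    (fun t => matrixProductMap A c (j, t)) ∈ C := by
  have hblock : (fun t => matrixProductMap A c (j, t)) = ∑ i, A i j • c i := by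
    ext t
    simp [matrixProductMap_apply, Finset.sum_apply]
  rw [hblock]
  exact Submodule.sum_mem C fun i _ => C.smul_mem _ (hc i)

theorem minDist_le_minDist_matrixProductCode [DecidableEq F] {A : Matrix (Fin s) (Fin m) F}
    (hA : A ≠ 0) (C : Submodule F (Fin n → F)) :
    minDist C ≤ minDist (matrixProductCode A fun _ => C) := by
  obtain ⟨i, j, hij⟩ : ∃ i j, A i j ≠ 0 := by
    by_contra! h
    exact hA (Matrix.ext h)
  refine minDist_le_minDist_of_forall (matrixProductCode_ne_bot (C := fun _ => C) hij)
    fun x hx hx0 => ?_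
  obtain ⟨c, hc, rfl⟩ := mem_matrixProductCode.1 hx
  obtain ⟨⟨j, t⟩, hjt⟩ := Function.ne_iff.1 hx0
  exact ⟨_, matrixProductMap_block_mem A hc j, Function.ne_iff.2 ⟨t, hjt⟩,
    hammingNorm_comp_le_of_injective _ (Prod.mk_right_injective j)⟩

end MatrixProductCode

theorem mul_transpose_eq_two_of_charP {p : ℕ} [CharP F p] :
    !![(1 : F), 1; 1, (p : F) - 1] * (!![(1 : F), 1; 1, (p : F) - 1])ᵀ = diagonal fun _ => 2 := by
  ext i j
  fin_cases i <;> fin_cases j <;> simp [Matrix.mul_apply] <;> norm_num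

theorem stmt13_general {F : Type*} [Field F] [DecidableEq F]
    {p : ℕ} (hodd : p ≠ 2) [CharP F p]
    {n : ℕ} (C : Submodule F (Fin n → F)) (k d : ℕ)
    (hLCD : IsLCD C) (hk : Module.finrank F C = k) (hd : minDist C = d) :
    IsLCD (matrixProductCode (!![1, 1; 1, (p : F) - 1]) (fun _ : Fin 2 => C)) ∧
    Module.finrank F
        (matrixProductCode (!![1, 1; 1, (p : F) - 1]) (fun _ : Fin 2 => C)) = 2 * k ∧
    d ≤ minDist (matrixProductCode (!![1, 1; 1, (p : F) - 1]) (fun _ : Fin 2 => C)) := by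
  set A : Matrix (Fin 2) (Fin 2) F := !![1, 1; 1, (p : F) - 1]
  have h2 : (2 : F) ≠ 0 := Ring.two_ne_zero (by rwa [ringChar.eq F p])
  have hAAt : A * Aᵀ = diagonal fun _ => 2 := mul_transpose_eq_two_of_charP
  have hAB : A * ((2 : F)⁻¹ • Aᵀ) = 1 := by
    rw [Matrix.mul_smul, hAAt]
    ext i j
    simp [diagonal_apply, one_apply, h2]
  have hA0 : A ≠ 0 := fun h => one_ne_zero (congrFun (congrFun h 0) 0)
  refine ⟨isLCD_matrixProductCode hAAt (fun _ => h2) (fun _ => hLCD), ?_, ?_⟩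
  · rw [finrank_matrixProductCode hAB, Fin.sum_univ_two, hk, two_mul]
  · exact hd ▸ minDist_le_minDist_matrixProductCode hA0 C

theorem stmt13 {F : Type*} [Field F] [Fintype F] [DecidableEq F]
    {p : ℕ} (hp : p.Prime) (hodd : p ≠ 2) [CharP F p]
    {n : ℕ} (C : Submodule F (Fin n → F)) (k d : ℕ)
    (hLCD : IsLCD C) (hk : Module.finrank F C = k) (hd : minDist C = d) :
    IsLCD (matrixProductCode (!![1, 1; 1, (p : F) - 1]) (fun _ : Fin 2 => C)) ∧
    Module.finrank F
        (matrixProductCode (!![1, 1; 1, (p : F) - 1]) (fun _ : Fin 2 => C)) = 2 * k ∧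
    d ≤ minDist (matrixProductCode (!![1, 1; 1, (p : F) - 1]) (fun _ : Fin 2 => C)) :=
  stmt13_general hodd C k d hLCD hk hd
end

section
/- Let F_q have characteristic 2 (q = 2^m), and let C be an LCD [n,k,d] code over F_q. Then the matrix-product code M = [C, C]·A with A = ((1,1),(0,1)) is an LCD code over F_q of length 2n, dimension 2k, and minimum distance exactly d. -/
open Polynomial Matrix Finset

variable {F : Type*} [Field F]

/-! Because `!![1, 1; 0, 1]` is invertible, `[C, C]·A` is just `C ⊕ C` placed in the two
blocks of coordinates. The dual of `C ⊕ C` is `C^⊥ ⊕ C^⊥`, so complementarity passes to it and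
the dimension doubles; Hamming weights add over the blocks, so a minimum weight word is one
with a minimum weight word of `C` in one block and zero in the other. -/

variable {m n : ℕ}

lemma Nat.sInf_eq_of_subset_of_forall_exists_le {S T : Set ℕ} (hST : S ⊆ T)
    (hTS : ∀ t ∈ T, ∃ s ∈ S, s ≤ t) : sInf T = sInf S := by
  rcases S.eq_empty_or_nonempty with rfl | hS
  · have hT : T = ∅ := Set.eq_empty_of_forall_notMem fun t ht => by
      obtain ⟨s, hs, -⟩ := hTS t ht
      exact hs
    rw [hT]
  · apply le_antisymm (Nat.sInf_le (hST (Nat.sInf_mem hS)))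
    obtain ⟨s, hs, hle⟩ := hTS _ (Nat.sInf_mem (hS.mono hST))
    exact (Nat.sInf_le hs).trans hle

lemma minDist_eq_of_forall_exists {ι κ : Type*} [Fintype ι] [Fintype κ] [DecidableEq F]
    {C : Submodule F (ι → F)} {D : Submodule F (κ → F)}
    (hCD : ∀ x ∈ C, x ≠ 0 → ∃ y ∈ D, y ≠ 0 ∧ hammingNorm y = hammingNorm x)
    (hDC : ∀ y ∈ D, y ≠ 0 → ∃ x ∈ C, x ≠ 0 ∧ hammingNorm x ≤ hammingNorm y) :
    minDist D = minDist C := by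
  refine Nat.sInf_eq_of_subset_of_forall_exists_le ?_ ?_
  · rintro _ ⟨x, hx, hx0, rfl⟩
    obtain ⟨y, hy, hy0, hw⟩ := hCD x hx hx0
    exact ⟨y, hy, hy0, hw⟩
  · rintro _ ⟨y, hy, hy0, rfl⟩
    obtain ⟨x, hx, hx0, hle⟩ := hDC y hy hy0
    exact ⟨_, ⟨x, hx, hx0, rfl⟩, hle⟩

lemma hammingNorm_eq_sum_curry {α β γ : Type*} [Fintype α] [Fintype β] [Zero γ]
    [DecidableEq γ] (x : α × β → γ) :
    hammingNorm x = ∑ a, hammingNorm (Function.curry x a) := by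
  simp only [hammingNorm, Finset.card_filter, Fintype.sum_prod_type]
  rfl

def blockCode (m : ℕ) (C : Submodule F (Fin n → F)) : Submodule F (Fin m × Fin n → F) :=
  (Submodule.pi Set.univ fun _ : Fin m => C).comap
    (LinearEquiv.curry F F (Fin m) (Fin n)).toLinearMap

@[simp]
lemma mem_blockCode {C : Submodule F (Fin n → F)} {x : Fin m × Fin n → F} :
    x ∈ blockCode m C ↔ ∀ j, Function.curry x j ∈ C := by
  simp [blockCode]

lemma uncurry_single_mem_blockCode {C : Submodule F (Fin n → F)} (j : Fin m) {c : Fin n → F}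
    (hc : c ∈ C) : Function.uncurry (Pi.single j c) ∈ blockCode m C := by
  refine mem_blockCode.2 fun i => ?_
  rw [Function.curry_uncurry]
  rcases eq_or_ne i j with rfl | hij
  · simpa using hc
  · simp [hij]

lemma matrixProductCode_le_blockCode {s : ℕ} (A : Matrix (Fin s) (Fin m) F)
    (C : Submodule F (Fin n → F)) : matrixProductCode A (fun _ => C) ≤ blockCode m C := by
  rintro _ ⟨c, hc, rfl⟩
  refine mem_blockCode.2 fun j => ?_
  have hblock : Function.curry (fun p : Fin m × Fin n => ∑ i, A i p.1 * c i p.2) j =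
      ∑ i, A i j • c i := by
    ext t
    simp [Finset.sum_apply]
  rw [hblock]
  exact C.sum_mem fun i _ => C.smul_mem _ (hc i)

lemma matrixProductCode_eq_blockCode (A : Matrix (Fin m) (Fin m) F) (hA : IsUnit A.det)
    (C : Submodule F (Fin n → F)) : matrixProductCode A (fun _ => C) = blockCode m C := by
  refine le_antisymm (matrixProductCode_le_blockCode A C) fun x hx => ?_
  -- solve `x_j = ∑ i, A i j • c_i` for `c` by applying `(A⁻¹)ᵀ`
  refine ⟨fun i => ∑ l, A⁻¹ l i • Function.curry x l,
    fun i => C.sum_mem fun l _ => C.smul_mem _ (mem_blockCode.1 hx l), ?_⟩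
  ext ⟨j, t⟩
  calc x (j, t) = ∑ l, (A⁻¹ * A) l j * x (l, t) := by simp [nonsing_inv_mul A hA, one_apply]
    _ = _ := by
      simp only [mul_apply, Finset.sum_mul, Finset.sum_apply, Pi.smul_apply, smul_eq_mul,
        Finset.mul_sum, Function.curry_apply]
      rw [Finset.sum_comm]
      exact Finset.sum_congr rfl fun _ _ => Finset.sum_congr rfl fun _ _ => by ring

def blockCodeEquiv (m : ℕ) (C : Submodule F (Fin n → F)) :
    blockCode m C ≃ₗ[F] (Fin m → C) where
  toFun x j := ⟨Function.curry x.1 j, mem_blockCode.1 x.2 j⟩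
  invFun c := ⟨Function.uncurry fun j => c j, mem_blockCode.2 fun j => (c j).2⟩
  map_add' _ _ := rfl
  map_smul' _ _ := rfl
  left_inv _ := rfl
  right_inv _ := rfl

lemma finrank_blockCode (m : ℕ) (C : Submodule F (Fin n → F)) :
    Module.finrank F (blockCode m C) = m * Module.finrank F C := by
  rw [(blockCodeEquiv m C).finrank_eq, Module.finrank_pi_fintype]
  simp

lemma sum_mul_uncurry_single (x : Fin m × Fin n → F) (j : Fin m) (c : Fin n → F) :
    ∑ p, x p * Function.uncurry (Pi.single j c) p = ∑ t, x (j, t) * c t := by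
  simp [Fintype.sum_prod_type, Pi.single_apply, ite_apply]

lemma IsLCD.blockCode {C : Submodule F (Fin n → F)} (hC : IsLCD C) : IsLCD (blockCode m C) := by
  refine eq_bot_iff.2 fun x hx => ?_
  obtain ⟨hxC, hxD⟩ := Submodule.mem_inf.1 hx
  have hblock : ∀ j, Function.curry x j = 0 := fun j => by
    have hdual : Function.curry x j ∈ dualCode C := fun c hc => by
      simpa [sum_mul_uncurry_single] using hxD _ (uncurry_single_mem_blockCode j hc)
    have hmem : Function.curry x j ∈ C ⊓ dualCode C :=
      Submodule.mem_inf.2 ⟨mem_blockCode.1 hxC j, hdual⟩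
    rwa [show C ⊓ dualCode C = ⊥ from hC, Submodule.mem_bot] at hmem
  ext ⟨j, t⟩
  exact congrFun (hblock j) t

lemma minDist_blockCode [DecidableEq F] [NeZero m] (C : Submodule F (Fin n → F)) :
    minDist (blockCode m C) = minDist C := by
  refine minDist_eq_of_forall_exists (fun c hc hc0 => ?_) (fun x hx hx0 => ?_)
  · refine ⟨_, uncurry_single_mem_blockCode 0 hc, fun h => hc0 ?_, ?_⟩
    · funext t
      simpa using congrFun h (0, t)
    · simp [hammingNorm_eq_sum_curry, Pi.single_apply, apply_ite]
  · obtain ⟨j, hj⟩ : ∃ j, Function.curry x j ≠ 0 := by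
      by_contra! h
      exact hx0 (funext fun p => congrFun (h p.1) p.2)
    refine ⟨_, mem_blockCode.1 hx j, hj, ?_⟩
    rw [hammingNorm_eq_sum_curry x]
    exact Finset.single_le_sum (f := fun a => hammingNorm (Function.curry x a))
      (fun _ _ => Nat.zero_le _) (Finset.mem_univ j)

theorem stmt14_general {F : Type*} [Field F] [DecidableEq F]
    {n : ℕ} (C : Submodule F (Fin n → F)) (k d : ℕ)
    (hLCD : IsLCD C) (hk : Module.finrank F C = k) (hd : minDist C = d) :
    IsLCD (matrixProductCode (!![1, 1; 0, 1] : Matrix (Fin 2) (Fin 2) F)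
        (fun _ : Fin 2 => C)) ∧
    Module.finrank F
        (matrixProductCode (!![1, 1; 0, 1] : Matrix (Fin 2) (Fin 2) F)
          (fun _ : Fin 2 => C)) = 2 * k ∧
    minDist (matrixProductCode (!![1, 1; 0, 1] : Matrix (Fin 2) (Fin 2) F)
        (fun _ : Fin 2 => C)) = d := by
  rw [matrixProductCode_eq_blockCode _ (by simp [det_fin_two]) C]
  exact ⟨hLCD.blockCode, by rw [finrank_blockCode, hk], by rw [minDist_blockCode, hd]⟩

theorem stmt14 {F : Type*} [Field F] [Fintype F] [DecidableEq F]
    [CharP F 2]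
    {n : ℕ} (C : Submodule F (Fin n → F)) (k d : ℕ)
    (hLCD : IsLCD C) (hk : Module.finrank F C = k) (hd : minDist C = d) :
    IsLCD (matrixProductCode (!![1, 1; 0, 1] : Matrix (Fin 2) (Fin 2) F)
        (fun _ : Fin 2 => C)) ∧
    Module.finrank F
        (matrixProductCode (!![1, 1; 0, 1] : Matrix (Fin 2) (Fin 2) F)
          (fun _ : Fin 2 => C)) = 2 * k ∧
    minDist (matrixProductCode (!![1, 1; 0, 1] : Matrix (Fin 2) (Fin 2) F)
        (fun _ : Fin 2 => C)) = d :=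
  stmt14_general C k d hLCD hk hd
end
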